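/- The signed Stirling numbers of the first kind satisfy, for n ≥ k ≥ 1: k·s(n,k) = n · Σ_{i=0}^{n−k} C(n−1,i) · ((−1)^i · i!/(i+1)) · s(n−1−i, k−1). -/

import Mathlib

/-!
Write `(x)ₙ = x(x-1)⋯(x-n+1) = ∑ₖ s(n,k) xᵏ`, so that `k·s(n,k)` is the coefficient of
`x^(k-1)` in the derivative `(x)ₙ'`. The claim is therefore the expansion
`(x)ₙ' = ∑ᵢ (-1)ⁱ/(i+1) · n(n-1)⋯(n-i) · (x)ₙ₋₁₋ᵢ`, i.e. `D = log (1 + Δ)` applied to `(x)ₙ`,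
since `Δ^(i+1) (x)ₙ = n(n-1)⋯(n-i) · (x)ₙ₋₁₋ᵢ`. This expansion follows by induction on `n` from
`(x)ₙ₊₁ = (x)ₙ · (x - n)`, the coefficients obeying a Pascal-type rule for falling factorials.
-/

/-- Signed Stirling numbers of the first kind, via the recurrence
`s(n+1,k) = s(n,k-1) - n·s(n,k)`. -/
def stirling1 : ℕ → ℕ → ℤ
  | 0, 0 => 1
  | 0, _ + 1 => 0
  | n + 1, 0 => -(n : ℤ) * stirling1 n 0
  | n + 1, k + 1 => stirling1 n k - (n : ℤ) * stirling1 n (k + 1)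

open Polynomial Finset

theorem Nat.succ_descFactorial_succ_eq_add (n k : ℕ) :
    (n + 1).descFactorial (k + 1) = n.descFactorial (k + 1) + (k + 1) * n.descFactorial k := by
  rw [succ_descFactorial_succ, descFactorial_succ, ← add_mul]
  obtain h | h := le_or_gt k n
  · rw [show n - k + (k + 1) = n + 1 by omega]
  · simp [descFactorial_eq_zero_iff_lt.mpr h]

theorem cast_stirling1_eq_coeff_descPochhammer (R : Type*) [CommRing R] :
    ∀ n k : ℕ, (stirling1 n k : R) = (descPochhammer R n).coeff k
  | 0, 0 => by simp [stirling1]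
  | 0, k + 1 => by simp [stirling1, coeff_one]
  | n + 1, 0 => by
    simp [stirling1, descPochhammer_succ_right, mul_sub, mul_comm,
      cast_stirling1_eq_coeff_descPochhammer R n 0]
  | n + 1, k + 1 => by
    rw [descPochhammer_succ_right, ← C_eq_natCast, coeff_mul_X_sub_C, stirling1,
      ← cast_stirling1_eq_coeff_descPochhammer R n k,
      ← cast_stirling1_eq_coeff_descPochhammer R n (k + 1)]
    push_cast
    ring

theorem stirling1_eq_zero_of_lt {n k : ℕ} (h : n < k) : stirling1 n k = 0 := by
  simpa using (cast_stirling1_eq_coeff_descPochhammer ℤ n k).trans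
    (coeff_eq_zero_of_natDegree_lt (by rwa [descPochhammer_natDegree]))

theorem descPochhammer_mul_X_sub_natCast {R : Type*} [CommRing R] {m j n : ℕ} (h : m + j = n) :
    descPochhammer R m * (X - (n : R[X])) =
      descPochhammer R (m + 1) - (j : R[X]) * descPochhammer R m := by
  rw [descPochhammer_succ_right, ← h]
  push_cast
  ring

section

variable (K : Type*) [Field K]

/-- `derivCoeff K n i` is the coefficient of `descPochhammer K (n - 1 - i)` in the derivative of
`descPochhammer K n`: the `(-1)ⁱ/(i+1)` of `log (1 + Δ)` times the factor `n.descFactorial (i+1)`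
produced by `Δ^(i+1)`. -/
def derivCoeff (n i : ℕ) : K := (-1) ^ i / (i + 1) * n.descFactorial (i + 1)

variable {K}

theorem derivCoeff_self (n : ℕ) : derivCoeff K n n = 0 := by
  simp [derivCoeff]

theorem derivCoeff_succ_zero (n : ℕ) : derivCoeff K (n + 1) 0 = derivCoeff K n 0 + 1 := by
  simp [derivCoeff]

theorem derivCoeff_succ_succ [CharZero K] (n i : ℕ) :
    derivCoeff K (n + 1) (i + 1) = derivCoeff K n (i + 1) - (i + 1) * derivCoeff K n i := by
  have hi : ((i + 1 : ℕ) : K) + 1 ≠ 0 := Nat.cast_add_one_ne_zero _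
  simp only [derivCoeff, Nat.succ_descFactorial_succ_eq_add n (i + 1)]
  push_cast at hi ⊢
  field_simp
  ring

theorem derivCoeff_succ (m i : ℕ) :
    derivCoeff K (m + 1) i = (m + 1) * m.choose i * ((-1) ^ i * i.factorial / (i + 1)) := by
  rw [derivCoeff, Nat.succ_descFactorial_succ, Nat.descFactorial_eq_factorial_mul_choose]
  push_cast
  ring

theorem derivative_descPochhammer_succ [CharZero K] (n : ℕ) :
    derivative (descPochhammer K (n + 1)) =
      ∑ p ∈ antidiagonal n, C (derivCoeff K (n + 1) p.1) * descPochhammer K p.2 := by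
  induction n with
  | zero => simp [derivCoeff]
  | succ n ih =>
    have mul_X_sub :
        (∑ p ∈ antidiagonal n, C (derivCoeff K (n + 1) p.1) * descPochhammer K p.2) *
          (X - ((n + 1 : ℕ) : K[X])) =
        ∑ p ∈ antidiagonal n, C (derivCoeff K (n + 1) p.1) * descPochhammer K (p.2 + 1) -
          ∑ p ∈ antidiagonal n, C ((p.1 + 1) * derivCoeff K (n + 1) p.1) * descPochhammer K p.2 := by
      rw [sum_mul, ← sum_sub_distrib]
      refine sum_congr rfl fun p hp => ?_
      have hp := HasAntidiagonal.mem_antidiagonal.mp hp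
      rw [mul_assoc, descPochhammer_mul_X_sub_natCast (j := p.1 + 1) (by omega)]
      simp only [map_mul, map_add, map_one, map_natCast, Nat.cast_add, Nat.cast_one]
      ring
    have reindex :
        ∑ p ∈ antidiagonal n, C (derivCoeff K (n + 1) p.1) * descPochhammer K (p.2 + 1) =
          C (derivCoeff K (n + 1) 0) * descPochhammer K (n + 1) +
            ∑ p ∈ antidiagonal n, C (derivCoeff K (n + 1) (p.1 + 1)) * descPochhammer K p.2 := by
      rw [← Nat.sum_antidiagonal_succ
          (f := fun p => C (derivCoeff K (n + 1) p.1) * descPochhammer K p.2),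
        Nat.sum_antidiagonal_succ', derivCoeff_self, map_zero, zero_mul, zero_add]
    rw [descPochhammer_succ_right, derivative_mul, ih, mul_X_sub, reindex,
      Nat.sum_antidiagonal_succ]
    simp only [derivCoeff_succ_zero, derivCoeff_succ_succ, map_add, map_sub, map_mul, map_one,
      map_natCast, add_mul, sub_mul, sum_sub_distrib, derivative_X, derivative_natCast, sub_zero,
      mul_one]
    ring

theorem succ_mul_stirling1_succ [CharZero K] (m l : ℕ) :
    ((l : K) + 1) * stirling1 (m + 1) (l + 1) =
      ∑ i ∈ range (m + 1), derivCoeff K (m + 1) i * stirling1 (m - i) l := by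
  have h := congrArg (coeff · l) (derivative_descPochhammer_succ (K := K) m)
  simp only [coeff_derivative, finsetSum_coeff, coeff_C_mul,
    ← cast_stirling1_eq_coeff_descPochhammer] at h
  rw [mul_comm, h, Nat.sum_antidiagonal_eq_sum_range_succ
    (fun i j => derivCoeff K (m + 1) i * (stirling1 j l : K))]

end

/-- Recurrence for the signed Stirling numbers of the first kind:
`k·s(n,k) = n·Σ_{i=0}^{n-k} C(n-1,i)·((-1)^i i!/(i+1))·s(n-1-i,k-1)` for `n ≥ k ≥ 1`. -/
theorem stirling1_recurrence (n k : ℕ) (hk : 1 ≤ k) (hkn : k ≤ n) :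
    (k : ℚ) * (stirling1 n k : ℚ) =
      (n : ℚ) * ∑ i ∈ Finset.range (n - k + 1),
        ((n - 1).choose i : ℚ) * ((-1 : ℚ) ^ i * (i.factorial : ℚ) / (i + 1)) *
          (stirling1 (n - 1 - i) (k - 1) : ℚ) := by
  obtain ⟨m, rfl⟩ : ∃ m, n = m + 1 := ⟨n - 1, by omega⟩
  obtain ⟨l, rfl⟩ : ∃ l, k = l + 1 := ⟨k - 1, by omega⟩
  simp only [Nat.add_sub_add_right, add_tsub_cancel_right, Nat.cast_add_one,
    succ_mul_stirling1_succ, mul_sum, derivCoeff_succ, mul_assoc]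
  refine (sum_subset (range_subset_range.mpr (by omega)) fun i hi hil => ?_).symm
  simp only [mem_range] at hi hil
  simp [stirling1_eq_zero_of_lt (show m - i < l by omega)]
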